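/- Let q ∈ ℕ₊ and let m be a q-uniformly rational flow measure on a tree T with root at infinity. Then (T,m) is a flow quotient of the homogeneous tree (T_q, m_{T_q}): for every w̄₀ ∈ T_q and every w₀ ∈ T there exists a flow submersion π : (T_q, m_{T_q}) → (T,m) such that π(w̄₀) = w₀. -/

import Mathlib

open scoped ENNReal NNReal
open MeasureTheory Filter

namespace Flow

/-- A tree with root at infinity: a set with a predecessor map, no cycles,
joint ancestors, and finitely many successors at each vertex. -/
structure RootedTree (T : Type*) where
  pred : T → T
  no_cycle : ∀ (x : T) (k : ℕ), 1 ≤ k → pred^[k] x ≠ x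
  connected : ∀ x y : T, ∃ k l : ℕ, pred^[k] x = pred^[l] y
  succ_finite : ∀ x : T, {y : T | pred y = x}.Finite

variable {T T₁ T₂ : Type*}

/-- The graph distance on a tree with root at infinity. -/
noncomputable def RootedTree.dist (t : RootedTree T) (x y : T) : ℕ :=
  sInf {n : ℕ | ∃ k l : ℕ, k + l = n ∧ t.pred^[k] x = t.pred^[l] y}

/-- The partial order: `x ≤ y` iff `y` is an ancestor of `x`. -/
def RootedTree.le (t : RootedTree T) (x y : T) : Prop :=
  ∃ k : ℕ, t.pred^[k] x = y

def RootedTree.lt (t : RootedTree T) (x y : T) : Prop :=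
  t.le x y ∧ x ≠ y

/-- A flow measure on a tree with root at infinity. -/
structure IsFlowMeasure (t : RootedTree T) (m : T → ℝ) : Prop where
  pos : ∀ x, 0 < m x
  flow : ∀ x, m x = ∑' y : {y : T // t.pred y = x}, m (y : T)

/-- A level function on a tree with root at infinity. -/
def IsLevel (t : RootedTree T) (lev : T → ℤ) : Prop :=
  ∀ x : T, lev (t.pred x) = lev x + 1

/-- A homogeneous tree where every vertex has exactly `q` successors. -/
def IsHomogeneous (t : RootedTree T) (q : ℕ) : Prop :=
  ∀ x : T, {y : T | t.pred y = x}.ncard = q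

/-- The canonical flow measure `q ^ ℓ(x)` on the homogeneous tree of index `q`. -/
noncomputable def canonicalFlow (q : ℕ) (lev : T → ℤ) : T → ℝ :=
  fun x => (q : ℝ) ^ (lev x)

/-- A `q`-uniformly rational flow measure. -/
def UniformlyRational (t : RootedTree T) (m : T → ℝ) (q : ℕ) : Prop :=
  ∀ x : T, ∃ n : ℕ, 0 < n ∧ (q : ℝ) * m x = (n : ℝ) * m (t.pred x)

/-- The `L^p(m)` norm of a function on a flow tree, `p ∈ [1,∞]`. -/
noncomputable def lpNorm (m : T → ℝ) (p : ℝ≥0∞) (f : T → ℂ) : ℝ≥0∞ :=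
  if p = ∞ then ⨆ x : T, (‖f x‖₊ : ℝ≥0∞)
  else (∑' x : T, (‖f x‖₊ : ℝ≥0∞) ^ p.toReal * ENNReal.ofReal (m x)) ^ (1 / p.toReal)

/-- The measure of a subset of a flow tree. -/
noncomputable def setMass (m : T → ℝ) (S : Set T) : ℝ≥0∞ :=
  ∑' x : S, ENNReal.ofReal (m (x : T))

/-- Boundedness of an operator on `L^p(m)`. -/
def BoundedOnLp (m : T → ℝ) (p : ℝ≥0∞) (O : (T → ℂ) → (T → ℂ)) : Prop :=
  ∃ C : ℝ, 0 < C ∧ ∀ f : T → ℂ, lpNorm m p f < ∞ →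
    lpNorm m p (O f) ≤ ENNReal.ofReal C * lpNorm m p f

/-- Boundedness on `L^p(m)` of an operator defined on `L²(m) ∩ L^p(m)`. -/
def BoundedOnLp₂ (m : T → ℝ) (p : ℝ≥0∞) (O : (T → ℂ) → (T → ℂ)) : Prop :=
  ∃ C : ℝ, 0 < C ∧ ∀ f : T → ℂ, lpNorm m 2 f < ∞ → lpNorm m p f < ∞ →
    lpNorm m p (O f) ≤ ENNReal.ofReal C * lpNorm m p f

/-- The `L^p → L^p` operator norm (supremum over the unit ball). -/
noncomputable def opNormLp (m : T → ℝ) (p : ℝ≥0∞) (O : (T → ℂ) → (T → ℂ)) : ℝ≥0∞ :=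
  ⨆ f : {f : T → ℂ // lpNorm m p f ≤ 1}, lpNorm m p (O f.1)

/-- The `L^p → L^p` operator norm of an operator defined on `L²(m) ∩ L^p(m)`. -/
noncomputable def opNormLp₂ (m : T → ℝ) (p : ℝ≥0∞) (O : (T → ℂ) → (T → ℂ)) : ℝ≥0∞ :=
  ⨆ f : {f : T → ℂ // lpNorm m 2 f < ∞ ∧ lpNorm m p f ≤ 1}, lpNorm m p (O f.1)

/-- The flow measure `m` is locally doubling. -/
def LocallyDoubling (t : RootedTree T) (m : T → ℝ) : Prop :=
  ∀ R : ℝ, 0 < R → ∃ D : ℝ, 0 < D ∧ ∀ (x : T) (r : ℝ), 0 < r → r ≤ R →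
    setMass m {y : T | (t.dist x y : ℝ) ≤ 2 * r} ≤
      ENNReal.ofReal D * setMass m {y : T | (t.dist x y : ℝ) ≤ r}

/-- The shift operator `Σ f (x) = f(𝔭(x))`. -/
noncomputable def shiftOp (t : RootedTree T) (f : T → ℂ) : T → ℂ :=
  fun x => f (t.pred x)

/-- The adjoint shift `Σ* f (x) = m(x)⁻¹ Σ_{y ∈ succ(x)} f(y) m(y)`. -/
noncomputable def shiftStarOp (t : RootedTree T) (m : T → ℝ) (f : T → ℂ) : T → ℂ :=
  fun x => ((m x : ℂ))⁻¹ * ∑' y : {y : T // t.pred y = x}, f (y : T) * ((m (y : T) : ℂ))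

/-- The flow gradient `∇ = I - Σ`. -/
noncomputable def gradOp (t : RootedTree T) (f : T → ℂ) : T → ℂ :=
  fun x => f x - f (t.pred x)

/-- The adjoint flow gradient `∇* = I - Σ*`. -/
noncomputable def gradStarOp (t : RootedTree T) (m : T → ℝ) (f : T → ℂ) : T → ℂ :=
  fun x => f x - shiftStarOp t m f x

/-- The flow Laplacian `𝓛 = I - (Σ + Σ*)/2`. -/
noncomputable def lapOp (t : RootedTree T) (m : T → ℝ) (f : T → ℂ) : T → ℂ :=
  fun x => f x - (shiftOp t f x + shiftStarOp t m f x) / 2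

/-- The heat semigroup `e^{-s𝓛}`, given by the exponential power series. -/
noncomputable def heatOp (t : RootedTree T) (m : T → ℝ) (s : ℝ) (f : T → ℂ) : T → ℂ :=
  fun x => ∑' k : ℕ, ((-(s : ℂ)) ^ k / (Nat.factorial k : ℂ)) * ((lapOp t m)^[k] f) x

/-- The integral kernel of an operator: `K_O(x,y) = O(𝟙_{y})(x) / m(y)`. -/
noncomputable def opKernel (m : T → ℝ) (O : (T → ℂ) → (T → ℂ)) (x y : T) : ℂ :=
  O (Set.indicator {y} fun _ => (1 : ℂ)) x / (m y : ℂ)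

/-- The (formal) adjoint of an operator, given by the conjugate-transpose kernel. -/
noncomputable def adjointOp (m : T → ℝ) (O : (T → ℂ) → (T → ℂ)) (f : T → ℂ) : T → ℂ :=
  fun x => ∑' y : T, (starRingEnd ℂ) (opKernel m O y x) * f y * ((m y : ℂ))

/-- A polynomial applied to an operator. -/
noncomputable def polyApply (L : (T → ℂ) → (T → ℂ)) (P : Polynomial ℂ) (f : T → ℂ) : T → ℂ :=
  fun x => ∑ i ∈ Finset.range (P.natDegree + 1), P.coeff i * (L^[i] f) x

/-- `B` is the continuous functional calculus `F(L)` of the self-adjoint operator `L`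
(whose spectrum is contained in `[0,2]`): `B` is approximated on `L²(m)` by polynomials
in `L`, with operator-norm error controlled by the sup-norm error on `[0,2]`. -/
def IsCfcOf (m : T → ℝ) (L : (T → ℂ) → (T → ℂ)) (F : ℝ → ℂ)
    (B : (T → ℂ) → (T → ℂ)) : Prop :=
  ∀ ε : ℝ, 0 < ε → ∃ P : Polynomial ℂ,
    (∀ lam : ℝ, lam ∈ Set.Icc (0 : ℝ) 2 → ‖F lam - P.eval (lam : ℂ)‖ ≤ ε) ∧
    ∀ f : T → ℂ, lpNorm m 2 f < ∞ →
      lpNorm m 2 (fun x => B f x - polyApply L P f x) ≤ ENNReal.ofReal ε * lpNorm m 2 f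

/-- `Φ` is the Borel functional calculus of the self-adjoint operator `L` with spectrum
in `[0,2]`: it agrees with the continuous functional calculus on continuous functions and
satisfies dominated convergence (bounded pointwise convergence on `[0,2]` implies strong
convergence on `L²(m)`). These properties determine `Φ F` uniquely on `L²(m)` for every
bounded Borel `F`. -/
structure IsBorelFC (m : T → ℝ) (L : (T → ℂ) → (T → ℂ))
    (Φ : (ℝ → ℂ) → (T → ℂ) → (T → ℂ)) : Prop where
  cfc_agree : ∀ F : ℝ → ℂ, ContinuousOn F (Set.Icc 0 2) → IsCfcOf m L F (Φ F)
  dominated : ∀ (Fs : ℕ → ℝ → ℂ) (F : ℝ → ℂ) (C : ℝ),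
    (∀ n, Measurable (Fs n)) → Measurable F →
    (∀ n, ∀ lam ∈ Set.Icc (0 : ℝ) 2, ‖Fs n lam‖ ≤ C) →
    (∀ lam ∈ Set.Icc (0 : ℝ) 2, Tendsto (fun n => Fs n lam) atTop (nhds (F lam))) →
    ∀ f : T → ℂ, lpNorm m 2 f < ∞ →
      Tendsto (fun n => lpNorm m 2 (fun x => Φ (Fs n) f x - Φ F f x)) atTop (nhds 0)

/-- The truncated Riesz transform `∇ F_N(𝓛)`, where
`F_N(s) = π^{-1/2} ∫₀^N e^{-ts} t^{-1/2} dt`. -/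
noncomputable def rieszApprox (t : RootedTree T) (m : T → ℝ) (N : ℕ) (f : T → ℂ) : T → ℂ :=
  fun x => (Real.sqrt Real.pi)⁻¹ •
    ∫ u in Set.Ioc (0 : ℝ) (N : ℝ), (Real.sqrt u)⁻¹ • gradOp t (heatOp t m u f) x

/-- `g = R f`, where the Riesz transform `R = ∇ 𝓛^{-1/2}` is the limit of the truncated
Riesz transforms `∇ F_N(𝓛)` in the strong operator topology of `L²(m)`. -/
def IsRieszOf (t : RootedTree T) (m : T → ℝ) (f g : T → ℂ) : Prop :=
  Tendsto (fun N : ℕ => lpNorm m 2 (fun x => rieszApprox t m N f x - g x)) atTop (nhds 0)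

/-- The integral kernel of the Riesz transform:
`K_R(x,y) = π^{-1/2} ∫₀^∞ K_{∇ e^{-u𝓛}}(x,y) u^{-1/2} du`. -/
noncomputable def rieszKernel (t : RootedTree T) (m : T → ℝ) (x y : T) : ℂ :=
  (Real.sqrt Real.pi)⁻¹ •
    ∫ u in Set.Ioi (0 : ℝ),
      (Real.sqrt u)⁻¹ • opKernel m (fun f => gradOp t (heatOp t m u f)) x y

/-- The convolution kernel `k̃_ℤ(n) = (2√2/π) n/(n² - 1/4)` of the skew-symmetric part of
the discrete Hilbert transform. -/
noncomputable def ktZ (n : ℤ) : ℂ :=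
  ((2 * Real.sqrt 2 / Real.pi : ℝ) : ℂ) * (n : ℂ) / ((n : ℂ) ^ 2 - 1 / 4)

/-- `lam` belongs to the resolvent set of the flow Laplacian on `L^p(m)`:
`lam - 𝓛` has a bounded two-sided inverse on `L^p(m)`. -/
def InResolvent (t : RootedTree T) (m : T → ℝ) (p : ℝ≥0∞) (lam : ℂ) : Prop :=
  ∃ B : (T → ℂ) → (T → ℂ), BoundedOnLp m p B ∧
    (∀ f : T → ℂ, lpNorm m p f < ∞ →
      B (fun x => lam * f x - lapOp t m f x) = f) ∧
    (∀ f : T → ℂ, lpNorm m p f < ∞ →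
      (fun x => lam * B f x - lapOp t m (B f) x) = f)

/-- A submersion between trees with root at infinity. -/
structure IsSubmersion (t₁ : RootedTree T₁) (t₂ : RootedTree T₂) (π : T₁ → T₂) : Prop where
  map_pred : ∀ x : T₁, π (t₁.pred x) = t₂.pred (π x)
  map_succ : ∀ x : T₁, π '' {y : T₁ | t₁.pred y = x} = {z : T₂ | t₂.pred z = π x}

/-- `π`-compatibility of the flow measures `m₁`, `m₂`:
`m₂(π x)/m₂(𝔭(π x)) = m₁(π⁻¹{π x} ∩ succ(𝔭 x))/m₁(𝔭 x)`. -/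
def FlowCompatible (t₁ : RootedTree T₁) (t₂ : RootedTree T₂) (π : T₁ → T₂)
    (m₁ : T₁ → ℝ) (m₂ : T₂ → ℝ) : Prop :=
  ∀ x : T₁,
    m₂ (π x) / m₂ (t₂.pred (π x)) =
      (∑' y : {y : T₁ // π y = π x ∧ t₁.pred y = t₁.pred x}, m₁ (y : T₁)) / m₁ (t₁.pred x)

/-- `O'` witnesses `π`-compatibility of `O`: `O Φ_π = Φ_π O'` and `O* Φ_π = Φ_π O'*`
on `L^∞(m₂)`, where `Φ_π f = f ∘ π` is the lifting operator. -/
def CompatiblePair (t₁ : RootedTree T₁) (t₂ : RootedTree T₂) (π : T₁ → T₂)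
    (m₁ : T₁ → ℝ) (m₂ : T₂ → ℝ)
    (O : (T₁ → ℂ) → (T₁ → ℂ)) (O' : (T₂ → ℂ) → (T₂ → ℂ)) : Prop :=
  (∀ f : T₂ → ℂ, lpNorm m₂ ∞ f < ∞ → O (f ∘ π) = (O' f) ∘ π) ∧
  (∀ f : T₂ → ℂ, lpNorm m₂ ∞ f < ∞ →
    adjointOp m₁ O (f ∘ π) = (adjointOp m₂ O' f) ∘ π)

/-- The squared Sobolev norm `∫ (1+ξ²)^s |G(ξ)|² dξ`, applied to the Fourier transform `G`
of the function under consideration. -/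
noncomputable def sobolevWeight (s : ℝ) (G : ℝ → ℂ) : ℝ≥0∞ :=
  ∫⁻ ξ : ℝ, ENNReal.ofReal ((1 + ξ ^ 2) ^ s) * (‖G ξ‖₊ : ℝ≥0∞) ^ 2

/-- The Sobolev norm `(∫ (1+ξ²)^s |G(ξ)|² dξ)^{1/2}`. -/
noncomputable def sobolevNorm (s : ℝ) (G : ℝ → ℂ) : ℝ≥0∞ :=
  sobolevWeight s G ^ (1 / 2 : ℝ)

/-- `G` is the (distributional) Fourier transform of `F`, characterised by duality
against Schwartz functions. -/
def FourierCoupled (F G : ℝ → ℂ) : Prop :=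
  ∀ φ : SchwartzMap ℝ ℂ,
    (∫ x : ℝ, F x * (FourierTransform.fourier (fun y : ℝ => (φ y : ℂ)) : ℝ → ℂ) x) = ∫ ξ : ℝ, G ξ * φ ξ

/-- The coefficients `g_F(n) = -(i/π) ∫_{-π}^{π} sin θ · F(1-cos θ) e^{inθ} dθ`,
i.e. `∇̃_ℤ k_{F(Δ_ℤ)}(n)` when `F` is bounded Borel on `[0,2]`. -/
noncomputable def gCoef (F : ℝ → ℂ) (n : ℤ) : ℂ :=
  (-(Complex.I / (Real.pi : ℂ))) *
    ∫ θ in Set.Ioc (-Real.pi) Real.pi,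
      ((Real.sin θ : ℂ)) * F (1 - Real.cos θ) * Complex.exp ((n : ℂ) * (θ : ℂ) * Complex.I)

lemma predZ_iter (k : ℕ) (n : ℤ) : (fun n : ℤ => n + 1)^[k] n = n + k := by
  induction k generalizing n with
  | zero => simp
  | succ k ih =>
      rw [Function.iterate_succ_apply, ih]
      push_cast
      ring

/-- `ℤ` as a tree with root at infinity (`𝔭(n) = n+1`); together with the flow measure
`mZ ≡ 1` this is the homogeneous flow tree `T₁`, whose flow Laplacian is the discrete
Laplacian `Δ_ℤ`. -/
noncomputable def treeZ : RootedTree ℤ where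
  pred n := n + 1
  no_cycle x k hk := by rw [predZ_iter]; omega
  connected x y := ⟨(y - x).toNat, (x - y).toNat, by rw [predZ_iter, predZ_iter]; omega⟩
  succ_finite x := (Set.finite_singleton (x - 1)).subset (by
    intro y hy
    simp only [Set.mem_setOf_eq] at hy
    simp only [Set.mem_singleton_iff]
    omega)

/-- The counting flow measure on `ℤ`. -/
def mZ : ℤ → ℝ := fun _ => 1

/-- The convolution kernel of a translation-invariant operator on `ℤ`: `k_B = B δ₀`. -/
noncomputable def kZker (B : (ℤ → ℂ) → (ℤ → ℂ)) (n : ℤ) : ℂ :=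
  B (Set.indicator {0} fun _ => (1 : ℂ)) n

end Flow

/-! The map `π` is forced on the ancestor line of `w̄₀`, namely `𝔭ᵏ(w̄₀) ↦ 𝔭ᵏ(w₀)`, and is then
extended downwards one generation at a time. Writing `q · m(z) = n(z) · m(𝔭 z)`, the flow
condition says that the positive integers `n(z)`, `z ∈ succ(v)`, sum to `q`, so the `q` successors
of a vertex `x` can be distributed over `succ(π x)` with exactly `n(z)` of them sent to `z`; on the
ancestor line one of these assignments is prescribed, and a transposition accommodates it.
Since the `n(z)` siblings sent to `z` carry mass `q^{ℓ(x)}` each, this is the compatibility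
`m(z)/m(𝔭 z) = n(z)/q`. -/

namespace Flow

variable {S T : Type*}

theorem exists_fiber_card_eq {α β : Type*} [Finite α] [Fintype β] (n : β → ℕ)
    (hn : ∑ b, n b = Nat.card α) : ∃ f : α → β, ∀ b, Nat.card {a // f a = b} = n b := by
  obtain ⟨e⟩ : Nonempty (α ≃ Σ b, Fin (n b)) := by
    rw [← Finite.card_eq, Nat.card_sigma]
    simpa using hn.symm
  exact ⟨fun a => (e a).1, fun b =>
    (Nat.card_congr ((e.subtypeEquiv fun _ => Iff.rfl).trans (Equiv.sigmaSubtype b))).trans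
      (Nat.card_fin _)⟩

theorem exists_fiber_card_eq_and_apply_eq {α β : Type*} [Finite α] [Fintype β] (n : β → ℕ)
    (hn : ∑ b, n b = Nat.card α) (a₀ : α) (b₀ : β) (hb₀ : 0 < n b₀) :
    ∃ f : α → β, (∀ b, Nat.card {a // f a = b} = n b) ∧ f a₀ = b₀ := by
  classical
  obtain ⟨f, hf⟩ := exists_fiber_card_eq n hn
  obtain ⟨⟨a₁, ha₁⟩⟩ := (Nat.card_pos_iff.1 ((hf b₀).symm ▸ hb₀)).1
  refine ⟨f ∘ Equiv.swap a₀ a₁, fun b => ?_, by simpa using ha₁⟩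
  exact (Nat.card_congr ((Equiv.swap a₀ a₁).subtypeEquiv fun _ => Iff.rfl)).trans (hf b)

namespace RootedTree

noncomputable instance instFintypeSucc (t : RootedTree T) (v : T) :
    Fintype {z // t.pred z = v} :=
  (t.succ_finite v).fintype

theorem iterate_pred_injective (t : RootedTree S) (x : S) :
    Function.Injective fun k : ℕ => t.pred^[k] x := by
  refine Function.Injective.of_lt_imp_ne fun k l hkl heq => ?_
  refine t.no_cycle (t.pred^[k] x) (l - k) (by omega) ?_
  rw [← Function.iterate_add_apply, Nat.sub_add_cancel hkl.le]
  exact heq.symm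

/-- `t.descend step b k l x` starts from `b l` at `t.pred^[k] x` and applies `step` along the
path down to `x`. -/
def descend (t : RootedTree S) (step : S → T → T) (b : ℕ → T) : ℕ → ℕ → S → T
  | 0, l, _ => b l
  | k + 1, l, x => step x (t.descend step b k l (t.pred x))

section descend

variable (t : RootedTree S) {step : S → T → T} {b : ℕ → T} {w : S}

theorem descend_iterate (hstep : ∀ l, step (t.pred^[l] w) (b (l + 1)) = b l) (j l : ℕ) :
    t.descend step b j (l + j) (t.pred^[l] w) = b l := by
  induction j generalizing l with
  | zero => rfl
  | succ j ih =>
    rw [descend, ← Function.iterate_succ_apply' t.pred, show l + (j + 1) = l + 1 + j by omega, ih,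
      hstep]

theorem descend_add (hstep : ∀ l, step (t.pred^[l] w) (b (l + 1)) = b l) {k l : ℕ} {x : S}
    (hx : t.pred^[k] x = t.pred^[l] w) (j : ℕ) :
    t.descend step b (k + j) (l + j) x = t.descend step b k l x := by
  induction k generalizing x with
  | zero =>
    subst hx
    rw [Nat.zero_add]
    exact t.descend_iterate hstep j l
  | succ k ih =>
    rw [show k + 1 + j = k + j + 1 by omega, descend, descend, ih hx]

theorem descend_congr (hstep : ∀ l, step (t.pred^[l] w) (b (l + 1)) = b l) {k l k' l' : ℕ}
    {x : S} (hx : t.pred^[k] x = t.pred^[l] w) (hx' : t.pred^[k'] x = t.pred^[l'] w) :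
    t.descend step b k l x = t.descend step b k' l' x := by
  wlog hle : k ≤ k' generalizing k l k' l'
  · exact (this hx' hx (le_of_not_ge hle)).symm
  obtain ⟨j, rfl⟩ := Nat.exists_eq_add_of_le hle
  have hl' : l' = l + j := t.iterate_pred_injective w <| show t.pred^[l'] w = _ by
    rw [← hx', Nat.add_comm k j, Nat.add_comm l j, Function.iterate_add_apply, hx,
      ← Function.iterate_add_apply]
  rw [hl', t.descend_add hstep hx]

theorem exists_map_eq_step (hstep : ∀ l, step (t.pred^[l] w) (b (l + 1)) = b l) :
    ∃ π : S → T, (∀ l, π (t.pred^[l] w) = b l) ∧ ∀ x, π x = step x (π (t.pred x)) := by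
  choose k l hkl using fun x => t.connected x w
  refine ⟨fun x => t.descend step b (k x) (l x) x, fun i => ?_, fun x => ?_⟩
  · exact t.descend_congr hstep (hkl _) (k' := 0) (l' := i) rfl
  · have hpred : t.pred^[k x] (t.pred x) = t.pred^[l x + 1] w := by
      rw [← Function.iterate_succ_apply t.pred, Function.iterate_succ_apply' t.pred, hkl,
        ← Function.iterate_succ_apply' t.pred]
    calc t.descend step b (k x) (l x) x
        = t.descend step b (k x + 1) (l x + 1) x := (t.descend_add hstep (hkl x) 1).symm
      _ = step x (t.descend step b (k (t.pred x)) (l (t.pred x)) (t.pred x)) := by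
        rw [descend, t.descend_congr hstep hpred (hkl _)]

end descend

end RootedTree

theorem IsFlowMeasure.sum_succ_eq {t : RootedTree T} {m : T → ℝ} (hm : IsFlowMeasure t m)
    {q : ℕ} {n : T → ℕ} (hn : ∀ z, (q : ℝ) * m z = n z * m (t.pred z)) (v : T) :
    ∑ z : {z // t.pred z = v}, n z = q := by
  have h : (∑ z : {z // t.pred z = v}, (n z : ℝ)) * m v = q * m v := by
    calc (∑ z : {z // t.pred z = v}, (n z : ℝ)) * m v
        = ∑ z : {z // t.pred z = v}, (n z : ℝ) * m (t.pred z) := by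
          rw [Finset.sum_mul]
          exact Finset.sum_congr rfl fun z _ => by rw [z.2]
      _ = ∑ z : {z // t.pred z = v}, (q : ℝ) * m z := Finset.sum_congr rfl fun z _ => (hn z).symm
      _ = q * m v := by rw [← Finset.mul_sum, hm.flow v, tsum_fintype]
  exact_mod_cast mul_right_cancel₀ (hm.pos v).ne' h

theorem exists_succ_map_fiber_card (tS : RootedTree S) (t : RootedTree T) (n : T → ℕ)
    (hn : ∀ z, 0 < n z) (w' : S) (w : T) (x : S) (v : T)
    (hsum : ∑ z : {z // t.pred z = v}, n z = Nat.card {y // tS.pred y = x}) :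
    ∃ d : {y // tS.pred y = x} → {z // t.pred z = v},
      (∀ z, Nat.card {y // d y = z} = n z) ∧
      ∀ l (hx : tS.pred (tS.pred^[l] w') = x) (hv : t.pred (t.pred^[l] w) = v),
        d ⟨_, hx⟩ = ⟨_, hv⟩ := by
  by_cases hspine : ∃ l, tS.pred (tS.pred^[l] w') = x ∧ t.pred (t.pred^[l] w) = v
  · obtain ⟨l₀, hx₀, hv₀⟩ := hspine
    obtain ⟨d, hd, hd₀⟩ := exists_fiber_card_eq_and_apply_eq _ hsum ⟨_, hx₀⟩ ⟨_, hv₀⟩ (hn _)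
    refine ⟨d, hd, fun l hx hv => ?_⟩
    obtain rfl : l = l₀ := Nat.succ_injective <| tS.iterate_pred_injective w' <| by
      simp only [Function.iterate_succ_apply', hx, hx₀]
    exact hd₀
  · obtain ⟨d, hd⟩ := exists_fiber_card_eq _ hsum
    exact ⟨d, hd, fun l hx hv => absurd ⟨l, hx, hv⟩ hspine⟩

theorem exists_map_fiber_card (tS : RootedTree S) (t : RootedTree T) (q : ℕ) (n : T → ℕ)
    (hS : ∀ x, Nat.card {y // tS.pred y = x} = q) (hT : ∀ v, ∑ z : {z // t.pred z = v}, n z = q)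
    (hn : ∀ z, 0 < n z) (w' : S) (w : T) :
    ∃ π : S → T, π w' = w ∧ (∀ y, t.pred (π y) = π (tS.pred y)) ∧
      ∀ x z, t.pred z = π x → Nat.card {y // π y = z ∧ tS.pred y = x} = n z := by
  choose D hD hDspine using fun x v =>
    exists_succ_map_fiber_card tS t n hn w' w x v ((hT v).trans (hS x).symm)
  obtain ⟨π, hπspine, hπstep⟩ := tS.exists_map_eq_step (w := w') (b := fun l => t.pred^[l] w)
    (step := fun y u => D (tS.pred y) u ⟨y, rfl⟩) fun l =>
      congrArg Subtype.val (hDspine _ _ l rfl (Function.iterate_succ_apply' _ _ _).symm)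
  have hπD : ∀ x y (hy : tS.pred y = x), π y = D x (π x) ⟨y, hy⟩ := by
    rintro x y rfl
    exact hπstep y
  refine ⟨π, hπspine 0, fun y => by rw [hπD _ y rfl]; exact (D _ _ _).2, fun x z hz => ?_⟩
  refine (Nat.card_congr ?_).trans (hD x (π x) ⟨z, hz⟩)
  exact
    { toFun := fun y => ⟨⟨y, y.2.2⟩, Subtype.ext ((hπD x y y.2.2).symm.trans y.2.1)⟩
      invFun := fun y => ⟨y.1.1, (hπD x y.1.1 y.1.2).trans (congrArg Subtype.val y.2), y.1.2⟩
      left_inv := fun _ => rfl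
      right_inv := fun _ => rfl }

theorem isSubmersion_of_nonempty_fiber {tS : RootedTree S} {t : RootedTree T} {π : S → T}
    (hpred : ∀ y, t.pred (π y) = π (tS.pred y))
    (hfiber : ∀ x z, t.pred z = π x → Nonempty {y // π y = z ∧ tS.pred y = x}) :
    IsSubmersion tS t π := by
  refine ⟨fun y => (hpred y).symm, fun x => Set.ext fun z => ⟨?_, fun hz => ?_⟩⟩
  · rintro ⟨y, rfl, rfl⟩
    exact hpred y
  · obtain ⟨y, hyz, hyx⟩ := hfiber x z hz
    exact ⟨y, hyx, hyz⟩

theorem flowCompatible_canonicalFlow {tS : RootedTree S} {t : RootedTree T} {π : S → T}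
    {q : ℕ} (hq : 0 < q) {lev : S → ℤ} (hlev : IsLevel tS lev) {m : T → ℝ}
    (hm : ∀ z, 0 < m z) {n : T → ℕ} (hn : ∀ z, (q : ℝ) * m z = n z * m (t.pred z))
    (hpred : ∀ y, t.pred (π y) = π (tS.pred y))
    (hcard : ∀ x z, t.pred z = π x → Nat.card {y // π y = z ∧ tS.pred y = x} = n z) :
    FlowCompatible tS t π (canonicalFlow q lev) m := by
  intro x
  have hsibling : ∀ y, tS.pred y = tS.pred x → lev y = lev x := fun y hy => by
    have := hlev y
    rw [hy, hlev x] at this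
    omega
  have hmass : ∑' y : {y // π y = π x ∧ tS.pred y = tS.pred x}, canonicalFlow q lev y =
      n (π x) * (q : ℝ) ^ lev x := by
    rw [tsum_congr fun y : {y // π y = π x ∧ tS.pred y = tS.pred x} =>
      show canonicalFlow q lev y = (q : ℝ) ^ lev x by rw [canonicalFlow, hsibling y y.2.2],
      tsum_const, hcard _ _ (hpred x), nsmul_eq_mul]
  have hq' : (q : ℝ) ≠ 0 := by exact_mod_cast hq.ne'
  rw [hmass, canonicalFlow, hlev x, zpow_add_one₀ hq',
    div_eq_div_iff (hm _).ne' (mul_ne_zero (zpow_ne_zero _ hq') hq')]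
  linear_combination (q : ℝ) ^ lev x * hn (π x)

end Flow

theorem uniformly_rational_is_quotient_of_homogeneous_general {T : Type*}
    (t : Flow.RootedTree T) (m : T → ℝ) (hm : Flow.IsFlowMeasure t m)
    (q : ℕ) (hq : 0 < q) (hrat : Flow.UniformlyRational t m q)
    {Tq : Type*} (tq : Flow.RootedTree Tq) (hhom : Flow.IsHomogeneous tq q)
    (levq : Tq → ℤ) (hlevq : Flow.IsLevel tq levq)
    (w0' : Tq) (w0 : T) :
    ∃ π : Tq → T, Flow.IsSubmersion tq t π ∧
      Flow.FlowCompatible tq t π (Flow.canonicalFlow q levq) m ∧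
      π w0' = w0 := by
  choose n hn_pos hn using hrat
  obtain ⟨π, hπw, hpred, hcard⟩ := Flow.exists_map_fiber_card tq t q n
    (fun x => (Nat.card_coe_set_eq _).trans (hhom x)) (hm.sum_succ_eq hn) hn_pos w0' w0
  refine ⟨π, Flow.isSubmersion_of_nonempty_fiber hpred fun x z hz => ?_,
    Flow.flowCompatible_canonicalFlow hq hlevq hm.pos hn hpred hcard, hπw⟩
  exact (Nat.card_pos_iff.1 ((hcard x z hz).symm ▸ hn_pos z)).1

/-- Every `q`-uniformly rational flow tree `(T,m)` is a flow quotient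
of the homogeneous tree `(T_q, m_{T_q})` (every vertex of `T_q` has exactly `q`
successors and `m_{T_q} = q^{ℓ}` is the canonical flow measure): for every `w̄₀ ∈ T_q`
and `w₀ ∈ T` there is a flow submersion `π : (T_q, m_{T_q}) → (T,m)` with
`π(w̄₀) = w₀`. -/
theorem uniformly_rational_is_quotient_of_homogeneous {T : Type*} [Nonempty T]
    (t : Flow.RootedTree T) (m : T → ℝ) (hm : Flow.IsFlowMeasure t m)
    (q : ℕ) (hq : 0 < q) (hrat : Flow.UniformlyRational t m q)
    {Tq : Type*} (tq : Flow.RootedTree Tq) (hhom : Flow.IsHomogeneous tq q)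
    (levq : Tq → ℤ) (hlevq : Flow.IsLevel tq levq)
    (w0' : Tq) (w0 : T) :
    ∃ π : Tq → T, Flow.IsSubmersion tq t π ∧
      Flow.FlowCompatible tq t π (Flow.canonicalFlow q levq) m ∧
      π w0' = w0 :=
  uniformly_rational_is_quotient_of_homogeneous_general t m hm q hq hrat tq hhom levq hlevq w0' w0
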